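/- Let W be an m × n real matrix with singular value decomposition W = Ũ Σ Ṽᵀ, where Ũ is m × min(m,n) with orthonormal columns, Ṽ is n × min(m,n) with orthonormal columns, and Σ is the min(m,n) × min(m,n) diagonal matrix of singular values. Then for U = Ũ·√Σ and V = √Σ·Ṽᵀ (where √Σ is the entrywise square root of the diagonal matrix Σ) one has W = U·V and (1/2)(‖U‖_F² + ‖V‖_F²) = ‖W‖_T. -/

import Mathlib

open Matrix BigOperators

/-- The Frobenius norm of a real matrix. -/
noncomputable def frobeniusNorm {m n : ℕ} (A : Matrix (Fin m) (Fin n) ℝ) : ℝ :=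
  Real.sqrt (∑ i, ∑ j, (A i j) ^ 2)

/-- The full list of `n` singular values of an `m × n` real matrix `W`, namely the
nonnegative square roots of the eigenvalues of `Wᵀ * W`. (At most `min m n` of these
are nonzero.) -/
noncomputable def singularValuesFull {m n : ℕ} (W : Matrix (Fin m) (Fin n) ℝ) :
    Fin n → ℝ :=
  fun i => Real.sqrt ((show (Wᵀ * W).IsHermitian by
    simpa [Matrix.conjTranspose_eq_transpose_of_trivial] using
      Matrix.isHermitian_conjTranspose_mul_self W).eigenvalues i)

/-- The trace norm (nuclear norm) of a real matrix: the sum of its singular values. -/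
noncomputable def traceNorm {m n : ℕ} (W : Matrix (Fin m) (Fin n) ℝ) : ℝ :=
  ∑ i, singularValuesFull W i

/-- `σ : Fin (min m n) → ℝ` is "the vector of singular values" of `W` when its entries
are nonnegative and, after padding with `n - min m n` zeros, it agrees (as a multiset)
with the nonnegative square roots of the eigenvalues of `Wᵀ * W`. -/
def IsSingularValueVector {m n : ℕ} (W : Matrix (Fin m) (Fin n) ℝ)
    (σ : Fin (min m n) → ℝ) : Prop :=
  (∀ i, 0 ≤ σ i) ∧
    Multiset.map σ Finset.univ.val + Multiset.replicate (n - min m n) 0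
      = Multiset.map (singularValuesFull W) Finset.univ.val

/-! With `D = diagonal √σ` we have `D * D = diagonal σ`, so `U * V = W`. Since `Ũ` has
orthonormal columns, `‖Ũ D‖_F² = tr (D Ũᵀ Ũ D) = tr (D D) = ∑ σᵢ`, and likewise for
`D Ṽᵀ`; the sum of the `σᵢ` is the trace norm because the padded `σ` lists the singular
values of `W`. -/

lemma frobeniusNorm_sq_eq_trace {m n : ℕ} (A : Matrix (Fin m) (Fin n) ℝ) :
    frobeniusNorm A ^ 2 = (Aᵀ * A).trace := by
  rw [frobeniusNorm, Real.sq_sqrt (by positivity), Matrix.trace, Finset.sum_comm]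
  simp [Matrix.diag, Matrix.mul_apply, sq]

lemma frobeniusNorm_transpose {m n : ℕ} (A : Matrix (Fin m) (Fin n) ℝ) :
    frobeniusNorm Aᵀ = frobeniusNorm A := by
  rw [frobeniusNorm, frobeniusNorm, Finset.sum_comm]
  rfl

lemma diagonal_sqrt_mul_diagonal_sqrt {ι : Type*} [Fintype ι] [DecidableEq ι] {σ : ι → ℝ}
    (hσ : ∀ i, 0 ≤ σ i) :
    (diagonal fun i => √(σ i)) * (diagonal fun i => √(σ i)) = diagonal σ := by
  rw [diagonal_mul_diagonal]
  exact congrArg diagonal (funext fun i => Real.mul_self_sqrt (hσ i))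

lemma frobeniusNorm_sq_mul_diagonal_sqrt {m k : ℕ} {U : Matrix (Fin m) (Fin k) ℝ}
    (hU : Uᵀ * U = 1) {σ : Fin k → ℝ} (hσ : ∀ i, 0 ≤ σ i) :
    frobeniusNorm (U * diagonal fun i => √(σ i)) ^ 2 = ∑ i, σ i := by
  rw [frobeniusNorm_sq_eq_trace, transpose_mul, diagonal_transpose, Matrix.mul_assoc,
    ← Matrix.mul_assoc Uᵀ, hU, Matrix.one_mul, diagonal_sqrt_mul_diagonal_sqrt hσ,
    trace_diagonal]

lemma IsSingularValueVector.sum_eq_traceNorm {m n : ℕ} {W : Matrix (Fin m) (Fin n) ℝ}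
    {σ : Fin (min m n) → ℝ} (hσ : IsSingularValueVector W σ) :
    ∑ i, σ i = traceNorm W := by
  simpa [Finset.sum, traceNorm] using congrArg Multiset.sum hσ.2

theorem svd_factorization_attains_trace_norm {m n : ℕ} (W : Matrix (Fin m) (Fin n) ℝ)
    (σ : Fin (min m n) → ℝ) (hσ : IsSingularValueVector W σ)
    (Ut : Matrix (Fin m) (Fin (min m n)) ℝ) (Vt : Matrix (Fin n) (Fin (min m n)) ℝ)
    (hUt : Utᵀ * Ut = 1) (hVt : Vtᵀ * Vt = 1)
    (hW : W = Ut * Matrix.diagonal σ * Vtᵀ) :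
    W = (Ut * Matrix.diagonal fun i => Real.sqrt (σ i)) *
          ((Matrix.diagonal fun i => Real.sqrt (σ i)) * Vtᵀ) ∧
      (1 / 2) * (frobeniusNorm (Ut * Matrix.diagonal fun i => Real.sqrt (σ i)) ^ 2 +
          frobeniusNorm ((Matrix.diagonal fun i => Real.sqrt (σ i)) * Vtᵀ) ^ 2)
        = traceNorm W := by
  have hVD : frobeniusNorm ((diagonal fun i => √(σ i)) * Vtᵀ) ^ 2 = ∑ i, σ i := by
    rw [← frobeniusNorm_transpose, transpose_mul, transpose_transpose, diagonal_transpose,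
      frobeniusNorm_sq_mul_diagonal_sqrt hVt hσ.1]
  refine ⟨?_, ?_⟩
  · rw [hW, ← diagonal_sqrt_mul_diagonal_sqrt hσ.1]
    simp only [Matrix.mul_assoc]
  · rw [frobeniusNorm_sq_mul_diagonal_sqrt hUt hσ.1, hVD, hσ.sum_eq_traceNorm]
    ring
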